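/- Let n ≥ 3 and k ≥ 1 be integers with 2k+1 ≤ n−1. If λ ∈ ℝ^{n−1} satisfies σ_m(λ) ≥ 0 for all 1 ≤ m ≤ 2k+1, then Ñ⁺_{k−1}(λ)·L̃⁺_k(λ) ≥ Ñ⁺_k(λ)·L̃⁺_{k−1}(λ). -/
import Mathlib


/-- The `k`-th elementary symmetric polynomial of `x ∈ ℝ^m`
(`σ_0 = 1`, `σ_k = 0` for `k > m`). -/
noncomputable def esymmR (m : ℕ) (x : Fin m → ℝ) (k : ℕ) : ℝ :=
  ∑ s ∈ Finset.powersetCard k (Finset.univ : Finset (Fin m)), ∏ i ∈ s, x i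

/-- The normalized `k`-th elementary symmetric function `H_k = σ_k / C(m,k)`
(`H_0 = 1`, `H_k = 0` for `k > m`). -/
noncomputable def Hnorm (m : ℕ) (x : Fin m → ℝ) (k : ℕ) : ℝ :=
  esymmR m x k / (m.choose k : ℝ)

/-- The point of `ℝ^{m-1}` obtained from `x ∈ ℝ^m` by deleting the `p`-th coordinate. -/
def deleteCoord {m : ℕ} (x : Fin m → ℝ) (p : Fin m) : Fin (m - 1) → ℝ :=
  fun i => if (i : ℕ) < (p : ℕ) then x ⟨(i : ℕ), by have := i.isLt; omega⟩
           else x ⟨(i : ℕ) + 1, by have := i.isLt; omega⟩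

/-- `L̃⁺_k(λ) = Σ_{i=0}^{k} C(k,i) H_{2i}(λ)`, the normalized intrinsic Gauss-Bonnet
curvature quantity in the sphere. -/
noncomputable def LtilP (m : ℕ) (x : Fin m → ℝ) (k : ℕ) : ℝ :=
  ∑ i ∈ Finset.range (k + 1), (k.choose i : ℝ) * Hnorm m x (2 * i)

/-- `Ñ⁺_k(λ) = Σ_{i=0}^{k} C(k,i) H_{2i+1}(λ)`. -/
noncomputable def NtilP (m : ℕ) (x : Fin m → ℝ) (k : ℕ) : ℝ :=
  ∑ i ∈ Finset.range (k + 1), (k.choose i : ℝ) * Hnorm m x (2 * i + 1)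

open Finset Polynomial

noncomputable def Hms (s : Multiset ℝ) (j : ℕ) : ℝ :=
  s.esymm j / ((Multiset.card s).choose j : ℝ)

lemma esymmR_eq_esymm (M : ℕ) (x : Fin M → ℝ) (k : ℕ) :
    esymmR M x k = ((Finset.univ : Finset (Fin M)).val.map x).esymm k :=
  (Finset.esymm_map_val x Finset.univ k).symm

lemma card_univ_val_map (M : ℕ) (x : Fin M → ℝ) :
    Multiset.card ((Finset.univ : Finset (Fin M)).val.map x) = M := by
  simp

lemma Hnorm_eq_Hms (M : ℕ) (x : Fin M → ℝ) (k : ℕ) :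
    Hnorm M x k = Hms ((Finset.univ : Finset (Fin M)).val.map x) k := by
  rw [Hnorm, Hms, esymmR_eq_esymm, card_univ_val_map]

lemma exists_fn (s : Multiset ℝ) :
    ∃ x : Fin (Multiset.card s) → ℝ,
      (Finset.univ : Finset (Fin (Multiset.card s))).val.map x = s := by
  induction s using Quotient.inductionOn with
  | h l =>
    refine ⟨fun i => l.get i, ?_⟩
    rw [Fin.univ_def]
    show ((List.finRange l.length : Multiset (Fin l.length)).map l.get) = _
    rw [Multiset.map_coe, List.map_get_finRange]
    rfl

lemma Hms_big {s : Multiset ℝ} {j : ℕ} (h : Multiset.card s < j) : Hms s j = 0 := by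
  rw [Hms, Nat.choose_eq_zero_of_lt h, Nat.cast_zero, div_zero]

lemma esymm_zero_eq (s : Multiset ℝ) : s.esymm 0 = 1 := by
  simp [Multiset.esymm]

lemma Hms_zero (s : Multiset ℝ) : Hms s 0 = 1 := by
  simp [Hms, esymm_zero_eq]

/-- Derivative step: given a real multiset of size `m ≥ 1`, there is a multiset of
size `m-1` (roots of derivative) with proportional elementary symmetric functions. -/
lemma multiset_deriv_step (s : Multiset ℝ) (h1 : 1 ≤ Multiset.card s) :
    ∃ r : Multiset ℝ, Multiset.card r = Multiset.card s - 1 ∧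
      ∀ i, i ≤ Multiset.card s - 1 →
        (Multiset.card s : ℝ) * r.esymm i = ((Multiset.card s - i : ℕ) : ℝ) * s.esymm i := by
  classical
  set m := Multiset.card s with hm
  set p : ℝ[X] := (s.map fun a => X - C a).prod with hp
  have hmonic : p.Monic := monic_multiset_prod_of_monic _ _ (fun a _ => monic_X_sub_C a)
  have hproots : p.roots = s := roots_multiset_prod_X_sub_C s
  have hpdeg : p.natDegree = m := by
    rw [hp, natDegree_multiset_prod_X_sub_C_eq_card]
  set q : ℝ[X] := derivative p with hq
  have hqcard : m - 1 ≤ Multiset.card q.roots := by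
    have := Polynomial.card_roots_le_derivative p
    rw [hproots, ← hq] at this
    omega
  have hqdeg_le : q.natDegree ≤ m - 1 := by
    have := natDegree_derivative_le p
    rw [← hq] at this
    omega
  have hqroots_le : Multiset.card q.roots ≤ q.natDegree := card_roots' q
  have hqdeg : q.natDegree = m - 1 := le_antisymm hqdeg_le (le_trans hqcard hqroots_le)
  have hqcard' : Multiset.card q.roots = q.natDegree := le_antisymm hqroots_le (hqdeg ▸ hqcard)
  have hplead : p.leadingCoeff = 1 := hmonic
  have hqtop : q.coeff (m - 1) = m := by
    rw [hq, coeff_derivative]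
    have h5 : m - 1 + 1 = m := by omega
    rw [h5, ← hpdeg, hmonic.coeff_natDegree, one_mul, hpdeg, Nat.cast_sub h1]
    push_cast
    ring
  have hqlead : q.leadingCoeff = (m : ℝ) := by
    rw [leadingCoeff, hqdeg, hqtop]
  refine ⟨q.roots, by omega, ?_⟩
  intro i hi
  have hip : i ≤ m := by omega
  have hcp : p.coeff (m - i) = (-1) ^ i * s.esymm i := by
    have := Polynomial.coeff_eq_esymm_roots_of_card
      (by rw [hproots, hpdeg] : Multiset.card p.roots = p.natDegree)
      (k := m - i) (by omega)
    rw [hproots, hpdeg, hplead] at this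
    have h2 : m - (m - i) = i := by omega
    rw [this, h2, one_mul]
  have hcq : q.coeff (m - 1 - i) = (m : ℝ) * ((-1) ^ i * q.roots.esymm i) := by
    have := Polynomial.coeff_eq_esymm_roots_of_card
      (by rw [hqcard', hqdeg] : Multiset.card q.roots = q.natDegree)
      (k := m - 1 - i) (by omega)
    rw [hqdeg, hqlead] at this
    have h2 : m - 1 - (m - 1 - i) = i := by omega
    rw [this, h2, mul_assoc]
  have hcq2 : q.coeff (m - 1 - i) = p.coeff (m - i) * ((m - i : ℕ) : ℝ) := by
    rw [hq, coeff_derivative]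
    have h3 : m - 1 - i + 1 = m - i := by omega
    rw [h3]
    have h4 : ((m - 1 - i : ℕ) : ℝ) + 1 = ((m - i : ℕ) : ℝ) := by
      exact_mod_cast congrArg (Nat.cast (R := ℝ)) h3
    rw [h4]
  rw [hcq2, hcp] at hcq
  have hsign : ((-1 : ℝ) ^ i) ≠ 0 := by
    simp [pow_ne_zero]
  have : (-1 : ℝ) ^ i * ((m : ℝ) * q.roots.esymm i) = (-1) ^ i * (((m - i : ℕ) : ℝ) * s.esymm i) := by
    ring_nf
    ring_nf at hcq
    linarith [hcq]
  exact mul_left_cancel₀ hsign this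

lemma Hms_deriv_step (s : Multiset ℝ) (h1 : 1 ≤ Multiset.card s) :
    ∃ r : Multiset ℝ, Multiset.card r = Multiset.card s - 1 ∧
      ∀ i, i ≤ Multiset.card s - 1 → Hms r i = Hms s i := by
  obtain ⟨r, hcard, hrel⟩ := multiset_deriv_step s h1
  refine ⟨r, hcard, fun i hi => ?_⟩
  set m := Multiset.card s with hm
  have hkey := hrel i hi
  have hchoose : (m - i) * m.choose i = m * (m - 1).choose i := by
    have h2 : m - 1 + 1 = m := by omega
    calc (m - i) * m.choose i = m.choose i * (m - i) := by ring
    _ = m.choose (i + 1) * (i + 1) := (Nat.choose_succ_right_eq m i).symm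
    _ = (m - 1).succ.choose i.succ * i.succ := by
          rw [Nat.succ_eq_add_one, Nat.succ_eq_add_one, h2]
    _ = (m - 1).succ * (m - 1).choose i := (Nat.add_one_mul_choose_eq _ _).symm
    _ = m * (m - 1).choose i := by rw [Nat.succ_eq_add_one, h2]
  have hc1 : (0 : ℝ) < ((m - 1).choose i : ℝ) := by
    exact_mod_cast Nat.cast_pos.2 (Nat.choose_pos (by omega))
  have hc2 : (0 : ℝ) < (m.choose i : ℝ) := by
    exact_mod_cast Nat.cast_pos.2 (Nat.choose_pos (by omega))
  have hm0 : (0 : ℝ) < (m : ℝ) := by exact_mod_cast h1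
  rw [Hms, Hms, hcard, ← hm, div_eq_div_iff (by positivity) (by positivity)]
  have hchR : ((m - i : ℕ) : ℝ) * (m.choose i : ℝ) = (m : ℝ) * ((m - 1).choose i : ℝ) := by
    exact_mod_cast congrArg (Nat.cast (R := ℝ)) hchoose
  apply mul_left_cancel₀ (ne_of_gt hm0)
  calc (m : ℝ) * (r.esymm i * (m.choose i : ℝ))
      = ((m : ℝ) * r.esymm i) * (m.choose i : ℝ) := by ring
    _ = (((m - i : ℕ) : ℝ) * s.esymm i) * (m.choose i : ℝ) := by rw [hkey]
    _ = s.esymm i * (((m - i : ℕ) : ℝ) * (m.choose i : ℝ)) := by ring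
    _ = s.esymm i * ((m : ℝ) * ((m - 1).choose i : ℝ)) := by rw [hchR]
    _ = (m : ℝ) * (s.esymm i * ((m - 1).choose i : ℝ)) := by ring

lemma esymmR_reverse (M : ℕ) (x : Fin M → ℝ) (hx : ∀ i, x i ≠ 0) {j : ℕ} (hj : j ≤ M) :
    esymmR M x j = (∏ i, x i) * esymmR M (fun i => (x i)⁻¹) (M - j) := by
  unfold esymmR
  rw [Finset.mul_sum]
  refine Finset.sum_nbij' (fun s => Finset.univ \ s) (fun t => Finset.univ \ t) ?_ ?_ ?_ ?_ ?_
  · intro s hs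
    rw [Finset.mem_powersetCard] at hs ⊢
    refine ⟨Finset.subset_univ _, ?_⟩
    rw [Finset.card_sdiff_of_subset (Finset.subset_univ _), Finset.card_univ, Fintype.card_fin, hs.2]
  · intro t ht
    rw [Finset.mem_powersetCard] at ht ⊢
    refine ⟨Finset.subset_univ _, ?_⟩
    rw [Finset.card_sdiff_of_subset (Finset.subset_univ _), Finset.card_univ, Fintype.card_fin, ht.2]
    omega
  · intro s hs
    exact Finset.sdiff_sdiff_eq_self (Finset.subset_univ s)
  · intro t ht
    exact Finset.sdiff_sdiff_eq_self (Finset.subset_univ t)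
  · intro s hs
    have hsub : s ⊆ Finset.univ := Finset.subset_univ s
    have hprod : (∏ i ∈ Finset.univ \ s, x i) * ∏ i ∈ s, x i = ∏ i, x i :=
      Finset.prod_sdiff hsub
    have hne : (∏ i ∈ Finset.univ \ s, x i) ≠ 0 :=
      Finset.prod_ne_zero_iff.2 (fun i _ => hx i)
    rw [Finset.prod_inv_distrib]
    field_simp
    linarith [hprod]

lemma Hnorm_reverse (M : ℕ) (x : Fin M → ℝ) (hx : ∀ i, x i ≠ 0) {j : ℕ} (hj : j ≤ M) :
    Hnorm M x j = (∏ i, x i) * Hnorm M (fun i => (x i)⁻¹) (M - j) := by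
  rw [Hnorm, Hnorm, esymmR_reverse M x hx hj, Nat.choose_symm hj]
  ring

lemma Hnorm_zero (M : ℕ) (x : Fin M → ℝ) : Hnorm M x 0 = 1 := by
  rw [Hnorm]
  have : esymmR M x 0 = 1 := by
    unfold esymmR
    simp
  rw [this]
  simp

lemma newton_base_two (s : Multiset ℝ) (h2 : Multiset.card s = 2) :
    Hms s 0 * Hms s 2 ≤ Hms s 1 ^ 2 := by
  obtain ⟨a, b, rfl⟩ := Multiset.card_eq_two.mp h2
  have e0 : ({a, b} : Multiset ℝ).esymm 0 = 1 := esymm_zero_eq _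
  have e1 : ({a, b} : Multiset ℝ).esymm 1 = a + b := by
    simp [Multiset.esymm, Multiset.powersetCard_one]
    ring
  have e2 : ({a, b} : Multiset ℝ).esymm 2 = a * b := by
    show ((Multiset.powersetCard 2 (a ::ₘ {b})).map Multiset.prod).sum = a * b
    rw [Multiset.powersetCard_cons]
    simp [Multiset.powersetCard_one, Multiset.powersetCard_eq_empty]
  rw [Hms, Hms, Hms, h2, e0, e1, e2]
  norm_num
  nlinarith [sq_nonneg (a - b)]

lemma newton_one_ms : ∀ (s : Multiset ℝ), Hms s 0 * Hms s 2 ≤ Hms s 1 ^ 2 := by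
  suffices h : ∀ m (s : Multiset ℝ), Multiset.card s = m → Hms s 0 * Hms s 2 ≤ Hms s 1 ^ 2 by
    intro s; exact h _ s rfl
  intro m
  induction m using Nat.strong_induction_on with
  | _ m IH =>
    intro s hs
    rcases lt_or_ge (Multiset.card s) 2 with h2 | h2
    · rw [Hms_big h2, mul_zero]; positivity
    rcases eq_or_lt_of_le h2 with h2' | h3
    · exact newton_base_two s h2'.symm
    · obtain ⟨r, hcard, hrel⟩ := Hms_deriv_step s (by omega)
      have h0 := hrel 0 (by omega)
      have h1 := hrel 1 (by omega)
      have hh2 := hrel 2 (by omega)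
      rw [← h0, ← h1, ← hh2]
      exact IH (Multiset.card s - 1) (by omega) r (by omega)

lemma esymmR_top (M : ℕ) (x : Fin M → ℝ) : esymmR M x M = ∏ i, x i := by
  unfold esymmR
  have hcard : (Finset.univ : Finset (Fin M)).card = M := by
    rw [Finset.card_univ, Fintype.card_fin]
  have h := Finset.powersetCard_self (Finset.univ : Finset (Fin M))
  rw [hcard] at h
  rw [h, Finset.sum_singleton]

lemma newton_ms (t : ℕ) (ht : 1 ≤ t) :
    ∀ (s : Multiset ℝ), Hms s (t - 1) * Hms s (t + 1) ≤ Hms s t ^ 2 := by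
  suffices h : ∀ m (s : Multiset ℝ), Multiset.card s = m →
      Hms s (t - 1) * Hms s (t + 1) ≤ Hms s t ^ 2 by
    intro s; exact h _ s rfl
  intro m
  induction m using Nat.strong_induction_on with
  | _ m IH =>
    intro s hs
    rcases lt_or_ge (Multiset.card s) (t + 1) with hlt | hge
    · rw [Hms_big hlt, mul_zero]; positivity
    rcases eq_or_lt_of_le hge with heq | hgt
    · -- card s = t + 1 : reversal base case
      obtain ⟨x, hx⟩ := exists_fn s
      have hHn : ∀ j, Hms s j = Hnorm (Multiset.card s) x j := by
        intro j; rw [Hnorm_eq_Hms, hx]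
      by_cases hzero : ∃ i, x i = 0
      · obtain ⟨i0, hi0⟩ := hzero
        have htop : Hms s (t + 1) = 0 := by
          rw [hHn, Hnorm, heq, esymmR_top,
            Finset.prod_eq_zero (Finset.mem_univ i0) hi0]
          simp
        rw [htop, mul_zero]; positivity
      · push_neg at hzero
        have hrev1 : Hnorm (Multiset.card s) x (t - 1)
            = (∏ i, x i) * Hnorm (Multiset.card s) (fun i => (x i)⁻¹) 2 := by
          have := Hnorm_reverse (Multiset.card s) x hzero (j := t - 1) (by omega)
          rwa [show Multiset.card s - (t - 1) = 2 by omega] at this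
        have hrev2 : Hnorm (Multiset.card s) x t
            = (∏ i, x i) * Hnorm (Multiset.card s) (fun i => (x i)⁻¹) 1 := by
          have := Hnorm_reverse (Multiset.card s) x hzero (j := t) (by omega)
          rwa [show Multiset.card s - t = 1 by omega] at this
        have hrev3 : Hnorm (Multiset.card s) x (t + 1)
            = (∏ i, x i) * Hnorm (Multiset.card s) (fun i => (x i)⁻¹) 0 := by
          have := Hnorm_reverse (Multiset.card s) x hzero (j := t + 1) (by omega)
          rwa [show Multiset.card s - (t + 1) = 0 by omega] at this
        rw [hHn, hHn, hHn, hrev1, hrev2, hrev3, Hnorm_zero]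
        have hnewton : Hnorm (Multiset.card s) (fun i => (x i)⁻¹) 0
            * Hnorm (Multiset.card s) (fun i => (x i)⁻¹) 2
            ≤ Hnorm (Multiset.card s) (fun i => (x i)⁻¹) 1 ^ 2 := by
          rw [Hnorm_eq_Hms, Hnorm_eq_Hms, Hnorm_eq_Hms]
          exact newton_one_ms _
        rw [Hnorm_zero] at hnewton
        calc (∏ i, x i) * Hnorm (Multiset.card s) (fun i => (x i)⁻¹) 2 * ((∏ i, x i) * 1)
            = (∏ i, x i) ^ 2 * (1 * Hnorm (Multiset.card s) (fun i => (x i)⁻¹) 2) := by ring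
          _ ≤ (∏ i, x i) ^ 2 * (Hnorm (Multiset.card s) (fun i => (x i)⁻¹) 1 ^ 2) := by
              apply mul_le_mul_of_nonneg_left hnewton (by positivity)
          _ = ((∏ i, x i) * Hnorm (Multiset.card s) (fun i => (x i)⁻¹) 1) ^ 2 := by ring
    · obtain ⟨r, hcard, hrel⟩ := Hms_deriv_step s (by omega)
      have h0 := hrel (t - 1) (by omega)
      have h1 := hrel t (by omega)
      have h2 := hrel (t + 1) (by omega)
      rw [← h0, ← h1, ← h2]
      exact IH (Multiset.card s - 1) (by omega) r (by omega)

lemma newtonH (M : ℕ) (x : Fin M → ℝ) (t : ℕ) (ht : 1 ≤ t) :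
    Hnorm M x (t - 1) * Hnorm M x (t + 1) ≤ Hnorm M x t ^ 2 := by
  rw [Hnorm_eq_Hms, Hnorm_eq_Hms, Hnorm_eq_Hms]
  exact newton_ms t ht _

lemma card_supersets {M q : ℕ} (t : Finset (Fin M)) (hq : t.card ≤ q) :
    ((Finset.powersetCard q (Finset.univ : Finset (Fin M))).filter (fun s => t ⊆ s)).card
      = (M - t.card).choose (q - t.card) := by
  classical
  have hcompl : (Finset.univ \ t).card = M - t.card := by
    rw [Finset.card_sdiff_of_subset (Finset.subset_univ _), Finset.card_univ, Fintype.card_fin]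
  rw [← hcompl, ← Finset.card_powersetCard (q - t.card) (Finset.univ \ t)]
  apply Finset.card_bij' (fun s _ => s \ t) (fun u _ => t ∪ u)
  · intro s hs
    rw [Finset.mem_filter, Finset.mem_powersetCard] at hs
    rw [Finset.mem_powersetCard]
    refine ⟨Finset.sdiff_subset_sdiff hs.1.1 (le_refl _), ?_⟩
    rw [Finset.card_sdiff_of_subset hs.2, hs.1.2]
  · intro u hu
    rw [Finset.mem_powersetCard] at hu
    rw [Finset.mem_filter, Finset.mem_powersetCard]
    have hdisj : Disjoint t u := Finset.disjoint_sdiff.mono_right hu.1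
    refine ⟨⟨Finset.subset_univ _, ?_⟩, Finset.subset_union_left⟩
    rw [Finset.card_union_of_disjoint hdisj, hu.2]
    omega
  · intro s hs
    rw [Finset.mem_filter] at hs
    exact Finset.union_sdiff_of_subset hs.2
  · intro u hu
    rw [Finset.mem_powersetCard] at hu
    exact Finset.union_sdiff_cancel_left (Finset.disjoint_sdiff.mono_right hu.1)

lemma esymmR_shift (M : ℕ) (x : Fin M → ℝ) (ε : ℝ) (q : ℕ) (hq : q ≤ M) :
    esymmR M (fun i => x i + ε) q
      = ∑ r ∈ Finset.range (q + 1),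
          (((M - r).choose (q - r) : ℝ) * ε ^ (q - r)) * esymmR M x r := by
  classical
  unfold esymmR
  have step1 : ∀ s ∈ Finset.powersetCard q (Finset.univ : Finset (Fin M)),
      (∏ i ∈ s, (x i + ε)) = ∑ t ∈ s.powerset, (∏ i ∈ t, x i) * ε ^ (q - t.card) := by
    intro s hs
    rw [Finset.mem_powersetCard] at hs
    rw [Finset.prod_add]
    apply Finset.sum_congr rfl
    intro t ht
    rw [Finset.mem_powerset] at ht
    rw [Finset.prod_const, Finset.card_sdiff_of_subset ht, hs.2]
  rw [Finset.sum_congr rfl step1]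
  have step2 :
      (∑ s ∈ Finset.powersetCard q (Finset.univ : Finset (Fin M)),
        ∑ t ∈ s.powerset, (∏ i ∈ t, x i) * ε ^ (q - t.card))
      = ∑ t ∈ (Finset.univ : Finset (Fin M)).powerset,
          ∑ _s ∈ (Finset.powersetCard q (Finset.univ : Finset (Fin M))).filter (fun s => t ⊆ s),
            (∏ i ∈ t, x i) * ε ^ (q - t.card) := by
    apply Finset.sum_comm'
    intro s t
    simp only [Finset.mem_powerset, Finset.mem_filter, Finset.mem_powersetCard]
    constructor
    · rintro ⟨hs, hts⟩
      exact ⟨⟨hs, hts⟩, Finset.subset_univ _⟩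
    · rintro ⟨⟨hs, hts⟩, -⟩
      exact ⟨hs, hts⟩
  rw [step2]
  have step3 :
      (∑ t ∈ (Finset.univ : Finset (Fin M)).powerset,
          ∑ _s ∈ (Finset.powersetCard q (Finset.univ : Finset (Fin M))).filter (fun s => t ⊆ s),
            (∏ i ∈ t, x i) * ε ^ (q - t.card))
      = ∑ t ∈ (Finset.univ : Finset (Fin M)).powerset,
          (((Finset.powersetCard q (Finset.univ : Finset (Fin M))).filter
              (fun s => t ⊆ s)).card : ℝ) * ((∏ i ∈ t, x i) * ε ^ (q - t.card)) := by
    apply Finset.sum_congr rfl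
    intro t _
    rw [Finset.sum_const, nsmul_eq_mul]
  rw [step3]
  have step4 :
      (∑ t ∈ (Finset.univ : Finset (Fin M)).powerset,
          (((Finset.powersetCard q (Finset.univ : Finset (Fin M))).filter
              (fun s => t ⊆ s)).card : ℝ) * ((∏ i ∈ t, x i) * ε ^ (q - t.card)))
      = ∑ j ∈ Finset.range (M + 1),
          ∑ t ∈ Finset.powersetCard j (Finset.univ : Finset (Fin M)),
            (((Finset.powersetCard q (Finset.univ : Finset (Fin M))).filter
                (fun s => t ⊆ s)).card : ℝ) * ((∏ i ∈ t, x i) * ε ^ (q - t.card)) := by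
    rw [← Finset.sum_fiberwise_of_maps_to (g := fun t : Finset (Fin M) => t.card)
      (t := Finset.range (M + 1)) ?_]
    · apply Finset.sum_congr rfl
      intro j _
      apply Finset.sum_congr
      · rw [Finset.powersetCard_eq_filter]
      · intro t _; rfl
    · intro t ht
      rw [Finset.mem_range, Nat.lt_succ_iff]
      rw [Finset.mem_powerset] at ht
      calc t.card ≤ (Finset.univ : Finset (Fin M)).card := Finset.card_le_card ht
        _ = M := by rw [Finset.card_univ, Fintype.card_fin]
  rw [step4]
  have hvanish : ∀ j ∈ Finset.range (M + 1), j ∉ Finset.range (q + 1) →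
      (∑ t ∈ Finset.powersetCard j (Finset.univ : Finset (Fin M)),
        (((Finset.powersetCard q (Finset.univ : Finset (Fin M))).filter
            (fun s => t ⊆ s)).card : ℝ) * ((∏ i ∈ t, x i) * ε ^ (q - t.card))) = 0 := by
    intro j _ hj2
    rw [Finset.mem_range, Nat.lt_succ_iff, not_le] at hj2
    apply Finset.sum_eq_zero
    intro t ht
    rw [Finset.mem_powersetCard] at ht
    have : (Finset.powersetCard q (Finset.univ : Finset (Fin M))).filter (fun s => t ⊆ s) = ∅ := by
      rw [Finset.filter_eq_empty_iff]
      intro s hs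
      rw [Finset.mem_powersetCard] at hs
      intro hts
      have := Finset.card_le_card hts
      omega
    rw [this]
    simp
  rw [← Finset.sum_subset (Finset.range_subset_range.2 (by omega : q + 1 ≤ M + 1)) hvanish]
  apply Finset.sum_congr rfl
  intro j hj
  rw [Finset.mem_range, Nat.lt_succ_iff] at hj
  rw [Finset.mul_sum]
  apply Finset.sum_congr rfl
  intro t ht
  rw [Finset.mem_powersetCard] at ht
  rw [card_supersets t (by rw [ht.2]; exact hj)]
  rw [ht.2]
  ring

lemma chain_ineq (h : ℕ → ℝ) (L : ℕ)
    (hpos : ∀ q, q ≤ L → 0 < h q)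
    (hN : ∀ t, 1 ≤ t → t + 1 ≤ L → h (t - 1) * h (t + 1) ≤ h t ^ 2) :
    ∀ b a, 1 ≤ a → a ≤ b + 1 → b + 1 ≤ L → h (a - 1) * h (b + 1) ≤ h a * h b := by
  intro b
  induction b with
  | zero =>
    intro a ha1 ha2 hL
    have : a = 1 := by omega
    subst this
    simp [mul_comm]
  | succ b IH =>
    intro a ha1 ha2 hL
    rcases eq_or_lt_of_le ha2 with haeq | halt
    · subst haeq
      have e : b + 1 + 1 - 1 = b + 1 := by omega
      rw [e, mul_comm]
    · have hab : a ≤ b + 1 := by omega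
      have hIH : h (a - 1) * h (b + 1) ≤ h a * h b := IH a ha1 hab (by omega)
      have hNb : h b * h (b + 2) ≤ h (b + 1) ^ 2 := by
        have := hN (b + 1) (by omega) (by omega)
        simpa using this
      have hb0 : 0 < h b := hpos b (by omega)
      have hb1 : 0 < h (b + 1) := hpos (b + 1) (by omega)
      have hb2 : 0 < h (b + 2) := hpos (b + 2) (by omega)
      have ha0 : 0 < h a := hpos a (by omega)
      have ham1 : 0 < h (a - 1) := hpos (a - 1) (by omega)
      have key : (h (a - 1) * h (b + 2)) * (h b * h (b + 1))
          ≤ (h a * h (b + 1)) * (h b * h (b + 1)) := by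
        calc (h (a - 1) * h (b + 2)) * (h b * h (b + 1))
            = (h (a - 1) * h (b + 1)) * (h b * h (b + 2)) := by ring
          _ ≤ (h a * h b) * (h (b + 1) ^ 2) := by
              apply mul_le_mul hIH hNb (by positivity) (by positivity)
          _ = (h a * h (b + 1)) * (h b * h (b + 1)) := by ring
      have := le_of_mul_le_mul_right key (by positivity)
      simpa using this

lemma choose_logconcave (K a b : ℕ) (h1 : 1 ≤ a) (hab : a ≤ b) :
    K.choose (a - 1) * K.choose (b + 1) ≤ K.choose a * K.choose b := by
  rcases le_or_gt (b + 1) K with hbK | hbK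
  · obtain ⟨a', rfl⟩ : ∃ a', a = a' + 1 := ⟨a - 1, by omega⟩
    have hs : a' + 1 - 1 = a' := by omega
    rw [hs]
    have key : ((a' + 1) * (b + 1)) * (K.choose a' * K.choose (b + 1))
        ≤ ((a' + 1) * (b + 1)) * (K.choose (a' + 1) * K.choose b) := by
      have e1 := Nat.choose_succ_right_eq K a'
      have e2 := Nat.choose_succ_right_eq K b
      calc ((a' + 1) * (b + 1)) * (K.choose a' * K.choose (b + 1))
          = (K.choose a' * (a' + 1)) * (K.choose (b + 1) * (b + 1)) := by ring
        _ = (K.choose a' * (a' + 1)) * (K.choose b * (K - b)) := by rw [e2]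
        _ ≤ (K.choose a' * (b + 1)) * (K.choose b * (K - a')) := by
            exact Nat.mul_le_mul (Nat.mul_le_mul (le_refl _) (by omega))
              (Nat.mul_le_mul (le_refl _) (by omega))
        _ = (K.choose a' * (K - a')) * (K.choose b * (b + 1)) := by ring
        _ = (K.choose (a' + 1) * (a' + 1)) * (K.choose b * (b + 1)) := by rw [e1]
        _ = ((a' + 1) * (b + 1)) * (K.choose (a' + 1) * K.choose b) := by ring
    exact Nat.le_of_mul_le_mul_left key (Nat.mul_pos (Nat.succ_pos _) (Nat.succ_pos _))
  · rw [Nat.choose_eq_zero_of_lt hbK, Nat.mul_zero]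
    exact Nat.zero_le _

lemma core_sum (c h : ℕ → ℝ) (K : ℕ)
    (hc0 : ∀ i, 0 ≤ c i)
    (hcK : ∀ i, K < i → c i = 0)
    (hclc : ∀ a b, 1 ≤ a → a ≤ b → c (a - 1) * c (b + 1) ≤ c a * c b)
    (hD : ∀ a b, a ≤ b + 1 → b ≤ K →
      0 ≤ h (2 * a + 1) * h (2 * b + 2) - h (2 * a) * h (2 * b + 3)) :
    0 ≤ ∑ p ∈ (Finset.range (K + 2) ×ˢ Finset.range (K + 2)),
        c p.1 * c p.2 * (h (2 * p.1 + 1) * h (2 * p.2 + 2) - h (2 * p.1) * h (2 * p.2 + 3)) := by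
  classical
  set B := Finset.range (K + 2) ×ˢ Finset.range (K + 2) with hB
  set f : ℕ × ℕ → ℝ := fun p =>
    c p.1 * c p.2 * (h (2 * p.1 + 1) * h (2 * p.2 + 2) - h (2 * p.1) * h (2 * p.2 + 3)) with hf
  set g : ℕ × ℕ → ℝ := fun p =>
    c (p.2 + 1) * c (p.1 - 1) * (h (2 * p.2 + 3) * h (2 * p.1) - h (2 * p.2 + 2) * h (2 * p.1 + 1))
    with hg
  set P := B.filter (fun p => p.1 ≤ p.2 + 1) with hP
  set N := B.filter (fun p => ¬ p.1 ≤ p.2 + 1) with hN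
  set M := B.filter (fun p => 1 ≤ p.1 ∧ p.1 ≤ p.2 ∧ p.2 ≤ K) with hM
  have hsplit : ∑ p ∈ B, f p = ∑ p ∈ P, f p + ∑ p ∈ N, f p :=
    (Finset.sum_filter_add_sum_filter_not B _ f).symm
  have hNM : ∑ p ∈ N, f p = ∑ p ∈ M, g p := by
    apply Finset.sum_nbij' (fun p => (p.2 + 1, p.1 - 1)) (fun p => (p.2 + 1, p.1 - 1))
    · intro p hp
      rw [hN, Finset.mem_filter, hB, Finset.mem_product, Finset.mem_range, Finset.mem_range] at hp
      rw [hM, Finset.mem_filter, hB, Finset.mem_product, Finset.mem_range, Finset.mem_range]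
      refine ⟨⟨by omega, by omega⟩, by omega, by omega, by omega⟩
    · intro p hp
      rw [hM, Finset.mem_filter, hB, Finset.mem_product, Finset.mem_range, Finset.mem_range] at hp
      rw [hN, Finset.mem_filter, hB, Finset.mem_product, Finset.mem_range, Finset.mem_range]
      refine ⟨⟨by omega, by omega⟩, by omega⟩
    · intro p hp
      rw [hN, Finset.mem_filter, hB, Finset.mem_product, Finset.mem_range, Finset.mem_range] at hp
      have h1 : 1 ≤ p.1 := by omega
      ext <;> simp <;> omega
    · intro p hp
      rw [hM, Finset.mem_filter, hB, Finset.mem_product, Finset.mem_range, Finset.mem_range] at hp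
      ext <;> simp <;> omega
    · intro p hp
      rw [hN, Finset.mem_filter, hB, Finset.mem_product, Finset.mem_range, Finset.mem_range] at hp
      rw [hf, hg]
      simp only []
      have e1 : p.1 - 1 + 1 = p.1 := by omega
      have e2 : 2 * (p.2 + 1) = 2 * p.2 + 2 := by ring
      have e3 : 2 * (p.1 - 1) + 3 = 2 * p.1 + 1 := by omega
      have e4 : 2 * (p.1 - 1) + 2 = 2 * p.1 := by omega
      have e5 : 2 * (p.2 + 1) + 1 = 2 * p.2 + 3 := by ring
      have e6 : p.2 + 1 - 1 = p.2 := by omega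
      rw [e1, e6, e3, e4, e5, e2]
  have hMP : M ⊆ P := by
    intro p hp
    rw [hM, Finset.mem_filter] at hp
    rw [hP, Finset.mem_filter]
    exact ⟨hp.1, by omega⟩
  have hPsplit : ∑ p ∈ P, f p = ∑ p ∈ P \ M, f p + ∑ p ∈ M, f p :=
    (Finset.sum_sdiff hMP).symm
  have hPnonneg : ∀ p ∈ P, 0 ≤ f p := by
    intro p hp
    rw [hP, Finset.mem_filter, hB, Finset.mem_product, Finset.mem_range, Finset.mem_range] at hp
    rcases le_or_gt p.1 K with h1K | h1K
    · rcases le_or_gt p.2 K with h2K | h2K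
      · apply mul_nonneg (mul_nonneg (hc0 _) (hc0 _))
        exact hD p.1 p.2 hp.2 h2K
      · have : f p = 0 := by rw [hf]; simp only []; rw [hcK p.2 h2K]; ring
        rw [this]
    · have : f p = 0 := by rw [hf]; simp only []; rw [hcK p.1 h1K]; ring
      rw [this]
  have hMnonneg : ∀ p ∈ M, 0 ≤ f p + g p := by
    intro p hp
    rw [hM, Finset.mem_filter] at hp
    obtain ⟨-, h1, h12, h2K⟩ := hp
    have hcc : c (p.1 - 1) * c (p.2 + 1) ≤ c p.1 * c p.2 := hclc p.1 p.2 h1 h12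
    have hDp : 0 ≤ h (2 * p.1 + 1) * h (2 * p.2 + 2) - h (2 * p.1) * h (2 * p.2 + 3) :=
      hD p.1 p.2 (by omega) h2K
    have expand : f p + g p = (c p.1 * c p.2 - c (p.1 - 1) * c (p.2 + 1))
        * (h (2 * p.1 + 1) * h (2 * p.2 + 2) - h (2 * p.1) * h (2 * p.2 + 3)) := by
      rw [hf, hg]; ring
    rw [expand]
    exact mul_nonneg (by linarith) hDp
  rw [hsplit, hPsplit, hNM]
  have t1 : 0 ≤ ∑ p ∈ P \ M, f p :=
    Finset.sum_nonneg (fun p hp => hPnonneg p (Finset.sdiff_subset hp))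
  have t2 : 0 ≤ ∑ p ∈ M, f p + ∑ p ∈ M, g p := by
    rw [← Finset.sum_add_distrib]
    exact Finset.sum_nonneg hMnonneg
  linarith

lemma esymmR_zero' (M : ℕ) (x : Fin M → ℝ) : esymmR M x 0 = 1 := by
  unfold esymmR; simp

/-- Positivity of all `Hnorm` up to level `Q` for the perturbed vector. -/
lemma Hnorm_shift_pos (m : ℕ) (lam : Fin m → ℝ) (Q : ℕ) (hQ : Q ≤ m)
    (hσ : ∀ r : ℕ, 1 ≤ r → r ≤ Q → 0 ≤ esymmR m lam r)
    {ε : ℝ} (hε : 0 < ε) :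
    ∀ q, q ≤ Q → 0 < Hnorm m (fun i => lam i + ε) q := by
  intro q hq
  have hqm : q ≤ m := le_trans hq hQ
  have hpos : 0 < esymmR m (fun i => lam i + ε) q := by
    rw [esymmR_shift m lam ε q hqm]
    apply Finset.sum_pos'
    · intro r hr
      rw [Finset.mem_range, Nat.lt_succ_iff] at hr
      rcases Nat.eq_zero_or_pos r with hr0 | hr1
      · subst hr0
        rw [esymmR_zero']
        positivity
      · have := hσ r hr1 (le_trans hr hq)
        positivity
    · refine ⟨0, Finset.mem_range.2 (by omega), ?_⟩
      rw [esymmR_zero']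
      have hch : 0 < ((m - 0).choose (q - 0) : ℝ) := by
        exact_mod_cast Nat.choose_pos (by omega)
      positivity
  rw [Hnorm]
  have hch : 0 < (m.choose q : ℝ) := by exact_mod_cast Nat.choose_pos hqm
  positivity

/-- Pascal splitting of the Gauss-Bonnet sums. -/
lemma pascal_split (m : ℕ) (x : Fin m → ℝ) (K δ : ℕ) :
    ∑ i ∈ Finset.range (K + 2), (((K + 1).choose i : ℝ)) * Hnorm m x (2 * i + δ)
      = (∑ i ∈ Finset.range (K + 1), ((K.choose i : ℝ)) * Hnorm m x (2 * i + δ))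
        + ∑ i ∈ Finset.range (K + 1), ((K.choose i : ℝ)) * Hnorm m x (2 * i + (δ + 2)) := by
  rw [Finset.sum_range_succ' (fun i => (((K + 1).choose i : ℝ)) * Hnorm m x (2 * i + δ)) (K + 1)]
  have hsplit2 : ∀ i, ((K + 1).choose (i + 1) : ℝ) = (K.choose i : ℝ) + (K.choose (i + 1) : ℝ) := by
    intro i
    rw [← Nat.cast_add, Nat.choose_succ_succ]
  have step1 : ∑ i ∈ Finset.range (K + 1),
      (((K + 1).choose (i + 1) : ℝ)) * Hnorm m x (2 * (i + 1) + δ)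
      = (∑ i ∈ Finset.range (K + 1), ((K.choose i : ℝ)) * Hnorm m x (2 * i + (δ + 2)))
        + ∑ i ∈ Finset.range (K + 1), ((K.choose (i + 1) : ℝ)) * Hnorm m x (2 * (i + 1) + δ) := by
    rw [← Finset.sum_add_distrib]
    apply Finset.sum_congr rfl
    intro i _
    rw [hsplit2 i, show 2 * (i + 1) + δ = 2 * i + (δ + 2) by ring]
    ring
  rw [step1]
  have step2 : ∑ i ∈ Finset.range (K + 1), ((K.choose (i + 1) : ℝ)) * Hnorm m x (2 * (i + 1) + δ)
      = (∑ i ∈ Finset.range (K + 1), ((K.choose i : ℝ)) * Hnorm m x (2 * i + δ))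
        - ((K.choose 0 : ℝ)) * Hnorm m x (2 * 0 + δ) := by
    have h3 : ∑ i ∈ Finset.range (K + 2), ((K.choose i : ℝ)) * Hnorm m x (2 * i + δ)
        = (∑ i ∈ Finset.range (K + 1), ((K.choose (i + 1) : ℝ)) * Hnorm m x (2 * (i + 1) + δ))
          + ((K.choose 0 : ℝ)) * Hnorm m x (2 * 0 + δ) :=
      Finset.sum_range_succ' (fun i => ((K.choose i : ℝ)) * Hnorm m x (2 * i + δ)) (K + 1)
    have h4 : ∑ i ∈ Finset.range (K + 2), ((K.choose i : ℝ)) * Hnorm m x (2 * i + δ)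
        = ∑ i ∈ Finset.range (K + 1), ((K.choose i : ℝ)) * Hnorm m x (2 * i + δ) := by
      rw [Finset.sum_range_succ]
      rw [Nat.choose_eq_zero_of_lt (by omega)]
      simp
    rw [h4] at h3
    linarith
  rw [step2]
  simp
  ring

/-- The main inequality, for vectors whose symmetric functions are strictly positive
up to level 2K+3 after perturbation. -/
lemma main_perturbed (m K : ℕ) (hm : 2 * K + 3 ≤ m) (y : Fin m → ℝ)
    (hpos : ∀ q, q ≤ 2 * K + 3 → 0 < Hnorm m y q) :
    NtilP m y (K + 1) * LtilP m y K ≤ NtilP m y K * LtilP m y (K + 1) := by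
  classical
  set H : ℕ → ℝ := fun q => Hnorm m y q with hH
  set c : ℕ → ℝ := fun i => (K.choose i : ℝ) with hc
  -- the four u-quantities
  set u0 : ℝ := ∑ i ∈ Finset.range (K + 1), c i * H (2 * i) with hu0
  set u1 : ℝ := ∑ i ∈ Finset.range (K + 1), c i * H (2 * i + 1) with hu1
  set u2 : ℝ := ∑ i ∈ Finset.range (K + 1), c i * H (2 * i + 2) with hu2
  set u3 : ℝ := ∑ i ∈ Finset.range (K + 1), c i * H (2 * i + 3) with hu3
  have hL0 : LtilP m y K = u0 := by
    rw [LtilP, hu0]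
  have hN0 : NtilP m y K = u1 := by
    rw [NtilP, hu1]
  have hL1 : LtilP m y (K + 1) = u0 + u2 := by
    rw [LtilP]
    have := pascal_split m y K 0
    simp only [Nat.add_zero, Nat.zero_add] at this
    rw [this, hu0, hu2]
  have hN1 : NtilP m y (K + 1) = u1 + u3 := by
    rw [NtilP]
    have := pascal_split m y K 1
    rw [this, hu1, hu3]
  rw [hL0, hN0, hL1, hN1]
  -- reduce to 0 ≤ u1 * u2 - u0 * u3
  have hcore : 0 ≤ u1 * u2 - u0 * u3 := by
    have hexp : u1 * u2 - u0 * u3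
        = ∑ p ∈ (Finset.range (K + 1) ×ˢ Finset.range (K + 1)),
            c p.1 * c p.2 * (H (2 * p.1 + 1) * H (2 * p.2 + 2) - H (2 * p.1) * H (2 * p.2 + 3)) := by
      rw [hu0, hu1, hu2, hu3, Finset.sum_mul_sum, Finset.sum_mul_sum]
      rw [← Finset.sum_product', ← Finset.sum_product', ← Finset.sum_sub_distrib]
      apply Finset.sum_congr rfl
      intro p _
      ring
    have hext : ∑ p ∈ (Finset.range (K + 1) ×ˢ Finset.range (K + 1)),
            c p.1 * c p.2 * (H (2 * p.1 + 1) * H (2 * p.2 + 2) - H (2 * p.1) * H (2 * p.2 + 3))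
        = ∑ p ∈ (Finset.range (K + 2) ×ˢ Finset.range (K + 2)),
            c p.1 * c p.2 * (H (2 * p.1 + 1) * H (2 * p.2 + 2) - H (2 * p.1) * H (2 * p.2 + 3)) := by
      apply Finset.sum_subset
      · exact Finset.product_subset_product (Finset.range_subset_range.2 (by omega))
          (Finset.range_subset_range.2 (by omega))
      · intro p hp hnp
        rw [Finset.mem_product, Finset.mem_range, Finset.mem_range] at hp hnp
        push_neg at hnp
        have : c p.1 = 0 ∨ c p.2 = 0 := by
          rcases le_or_gt p.1 K with h1 | h1
          · right
            rw [hc]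
            have : K < p.2 := by
              by_contra hcon
              push_neg at hcon
              exact absurd (hnp (by omega)) (by omega)
            simp only []
            rw [Nat.choose_eq_zero_of_lt this, Nat.cast_zero]
          · left
            rw [hc]
            simp only []
            rw [Nat.choose_eq_zero_of_lt h1, Nat.cast_zero]
        rcases this with h | h <;> rw [h] <;> ring
    rw [hexp, hext]
    apply core_sum
    · intro i; rw [hc]; positivity
    · intro i hi; rw [hc]; simp only []; rw [Nat.choose_eq_zero_of_lt hi, Nat.cast_zero]
    · intro a b h1 hab
      rw [hc]
      simp only []
      have := choose_logconcave K a b h1 hab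
      have hcast : ((K.choose (a - 1) * K.choose (b + 1) : ℕ) : ℝ)
          ≤ ((K.choose a * K.choose b : ℕ) : ℝ) := by exact_mod_cast this
      push_cast at hcast
      linarith
    · intro a b hab hbK
      have hchain := chain_ineq H (2 * K + 3)
        (fun q hq => hpos q hq)
        (fun t ht htL => by
          have := newtonH m y t ht
          rw [hH]
          exact this)
        (2 * b + 2) (2 * a + 1) (by omega) (by omega) (by omega)
      have e1 : 2 * a + 1 - 1 = 2 * a := by omega
      have e2 : 2 * b + 2 + 1 = 2 * b + 3 := by omega
      rw [e1, e2] at hchain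
      linarith
  nlinarith [hcore]

open Filter

lemma cont_esymm (m : ℕ) (lam : Fin m → ℝ) (q : ℕ) :
    Continuous (fun ε : ℝ => esymmR m (fun i => lam i + ε) q) := by
  unfold esymmR
  apply continuous_finset_sum
  intro s _
  apply continuous_finset_prod
  intro i _
  exact continuous_const.add continuous_id

lemma cont_Hnorm (m : ℕ) (lam : Fin m → ℝ) (q : ℕ) :
    Continuous (fun ε : ℝ => Hnorm m (fun i => lam i + ε) q) := by
  unfold Hnorm
  exact (cont_esymm m lam q).div_const _


/-- If `σ_m(λ) ≥ 0` for `1 ≤ m ≤ 2k+1`, then `Ñ⁺_{k−1} L̃⁺_k ≥ Ñ⁺_k L̃⁺_{k−1}`. -/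
theorem stmt_17 (n : ℕ) (hn : 3 ≤ n) (k : ℕ) (hk1 : 1 ≤ k) (hk2 : 2 * k + 1 ≤ n - 1)
    (lam : Fin (n - 1) → ℝ)
    (hσ : ∀ m : ℕ, 1 ≤ m → m ≤ 2 * k + 1 → 0 ≤ esymmR (n - 1) lam m) :
    NtilP (n - 1) lam k * LtilP (n - 1) lam (k - 1) ≤
      NtilP (n - 1) lam (k - 1) * LtilP (n - 1) lam k := by
  obtain ⟨K, rfl⟩ : ∃ K, k = K + 1 := ⟨k - 1, by omega⟩
  have hKk : K + 1 - 1 = K := by omega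
  rw [hKk]
  have hmK : 2 * K + 3 ≤ n - 1 := by omega
  -- the function Φ
  set Φ : ℝ → ℝ := fun ε =>
    NtilP (n - 1) (fun i => lam i + ε) (K + 1) * LtilP (n - 1) (fun i => lam i + ε) K with hΦ
  set Ψ : ℝ → ℝ := fun ε =>
    NtilP (n - 1) (fun i => lam i + ε) K * LtilP (n - 1) (fun i => lam i + ε) (K + 1) with hΨ
  have hcontL : ∀ j, Continuous (fun ε : ℝ => LtilP (n - 1) (fun i => lam i + ε) j) := by
    intro j
    unfold LtilP
    apply continuous_finset_sum
    intro i _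
    exact continuous_const.mul (cont_Hnorm (n - 1) lam (2 * i))
  have hcontN : ∀ j, Continuous (fun ε : ℝ => NtilP (n - 1) (fun i => lam i + ε) j) := by
    intro j
    unfold NtilP
    apply continuous_finset_sum
    intro i _
    exact continuous_const.mul (cont_Hnorm (n - 1) lam (2 * i + 1))
  have hcontΦ : Continuous Φ := ((hcontN (K + 1)).mul (hcontL K))
  have hcontΨ : Continuous Ψ := ((hcontN K).mul (hcontL (K + 1)))
  have hle : ∀ ε : ℝ, ε ∈ Set.Ioi (0 : ℝ) → Φ ε ≤ Ψ ε := by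
    intro ε hε
    rw [Set.mem_Ioi] at hε
    apply main_perturbed (n - 1) K hmK
    apply Hnorm_shift_pos (n - 1) lam (2 * K + 3) hmK ?_ hε
    intro r hr1 hr2
    exact hσ r hr1 (by omega)
  -- limit as ε → 0⁺
  have h0 : Φ 0 ≤ Ψ 0 := by
    have htΦ : Tendsto Φ (nhdsWithin 0 (Set.Ioi 0)) (nhds (Φ 0)) :=
      (hcontΦ.tendsto 0).mono_left nhdsWithin_le_nhds
    have htΨ : Tendsto Ψ (nhdsWithin 0 (Set.Ioi 0)) (nhds (Ψ 0)) :=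
      (hcontΨ.tendsto 0).mono_left nhdsWithin_le_nhds
    apply le_of_tendsto_of_tendsto htΦ htΨ
    exact eventually_mem_nhdsWithin.mono hle
  have hlam : (fun i => lam i + (0 : ℝ)) = lam := by
    funext i; ring
  rw [hΦ, hΨ] at h0
  simp only [] at h0
  rw [hlam] at h0
  exact h0
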